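/- arXiv:1609.07814 — 2 statements merged into one kernel-verified Lean document; each statement's English description precedes it below -/
import Mathlib

section
/- Let n ≥ 1, let Γ̊, K : ℝⁿ → Fin n → Fin n → Fin n → ℝ be smooth (writing Γ̊ x σ μ ν = Γ̊^σ_{μν}(x), with μ the differentiation index), assume Γ̊ is symmetric in its two lower indices, and set Γ = Γ̊ + K. Then the Ricci tensors, defined by Ric(Γ)_{λν} = Σ_σ R(Γ)^σ_{λσν}, satisfy for all x, λ, ν: Ric(Γ)_{λν} = Ric(Γ̊)_{λν} + Σ_σ ∇̊_σ K^σ_{νλ} − Σ_σ ∇̊_ν K^σ_{σλ} + Σ_{σ,α} ( K^σ_{σα} K^α_{νλ} − K^σ_{να} K^α_{σλ} ). -/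
open scoped BigOperators

/-- Partial derivative in the `μ`-th coordinate direction of a real-valued
function on `ℝⁿ`. -/
noncomputable def pdv {n : ℕ} (μ : Fin n) (f : (Fin n → ℝ) → ℝ) (x : Fin n → ℝ) : ℝ :=
  fderiv ℝ f x (Pi.single μ 1)

/-- Coordinate curvature tensor of a connection-coefficient field `Γ`
(written `Γ x σ μ ν = Γ^σ_{μν}(x)`, with `μ` the differentiation index):
`R(Γ)^σ_{λμν} = ∂_μ Γ^σ_{νλ} − ∂_ν Γ^σ_{μλ} + Σ_α (Γ^σ_{μα} Γ^α_{νλ} − Γ^σ_{να} Γ^α_{μλ})`. -/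
noncomputable def curv {n : ℕ} (Γ : (Fin n → ℝ) → Fin n → Fin n → Fin n → ℝ)
    (x : Fin n → ℝ) (σ l μ ν : Fin n) : ℝ :=
  pdv μ (fun y => Γ y σ ν l) x - pdv ν (fun y => Γ y σ μ l) x
    + ∑ α, (Γ x σ μ α * Γ x α ν l - Γ x σ ν α * Γ x α μ l)

/-- Ricci tensor by contraction: `Ric(Γ)_{λν} = Σ_σ R(Γ)^σ_{λσν}`. -/
noncomputable def ricci {n : ℕ} (Γ : (Fin n → ℝ) → Fin n → Fin n → Fin n → ℝ)
    (x : Fin n → ℝ) (l ν : Fin n) : ℝ :=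
  ∑ σ, curv Γ x σ l σ ν

/-- Covariant derivative `∇̊_μ K^σ_{νλ}` of a (1,2)-tensor field `K` with respect to
a connection `Γ₀`. -/
noncomputable def covd {n : ℕ} (Γ₀ K : (Fin n → ℝ) → Fin n → Fin n → Fin n → ℝ)
    (x : Fin n → ℝ) (μ σ ν l : Fin n) : ℝ :=
  pdv μ (fun y => K y σ ν l) x
    + ∑ α, (Γ₀ x σ μ α * K x α ν l - Γ₀ x α μ ν * K x σ α l - Γ₀ x α μ l * K x σ ν α)

lemma pdv_add' {n : ℕ} (μ : Fin n) (f g : (Fin n → ℝ) → ℝ) (x : Fin n → ℝ)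
    (hf : DifferentiableAt ℝ f x) (hg : DifferentiableAt ℝ g x) :
    pdv μ (fun y => f y + g y) x = pdv μ f x + pdv μ g x := by
  simp [pdv, fderiv_fun_add hf hg]

/-- The Ricci tensor of `Γ = Γ̊ + K` in terms of the Ricci tensor
of the symmetric connection `Γ̊` and contortion terms (the paper's equation (11)). -/
theorem ricci_decomposition (n : ℕ) (hn : 1 ≤ n)
    (Γ₀ K : (Fin n → ℝ) → Fin n → Fin n → Fin n → ℝ)
    (hΓ₀_smooth : ∀ σ μ ν, ContDiff ℝ (⊤ : ℕ∞) (fun x => Γ₀ x σ μ ν))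
    (hK_smooth : ∀ σ μ ν, ContDiff ℝ (⊤ : ℕ∞) (fun x => K x σ μ ν))
    (hΓ₀_symm : ∀ x σ μ ν, Γ₀ x σ μ ν = Γ₀ x σ ν μ)
    (Γ : (Fin n → ℝ) → Fin n → Fin n → Fin n → ℝ)
    (hΓ : ∀ x σ μ ν, Γ x σ μ ν = Γ₀ x σ μ ν + K x σ μ ν) :
    ∀ (x : Fin n → ℝ) (l ν : Fin n),
      ricci Γ x l ν
        = ricci Γ₀ x l ν
          + (∑ σ, covd Γ₀ K x σ σ ν l) - (∑ σ, covd Γ₀ K x ν σ σ l)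
          + ∑ σ, ∑ α, (K x σ σ α * K x α ν l - K x σ ν α * K x α σ l) := by
  intro x l ν
  have hd : ∀ (a b c μ : Fin n),
      pdv μ (fun y => Γ y a b c) x
        = pdv μ (fun y => Γ₀ y a b c) x + pdv μ (fun y => K y a b c) x := by
    intro a b c μ
    have he : (fun y => Γ y a b c) = fun y => Γ₀ y a b c + K y a b c :=
      funext fun y => hΓ y a b c
    rw [he, pdv_add' μ _ _ x ((hΓ₀_smooth a b c).differentiable (by simp) x)
      ((hK_smooth a b c).differentiable (by simp) x)]
  have s1 : ∑ σ : Fin n, ∑ α : Fin n, Γ₀ x α σ ν * K x σ α l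
      = ∑ σ : Fin n, ∑ α : Fin n, Γ₀ x σ ν α * K x α σ l := by
    rw [Finset.sum_comm]
    exact Finset.sum_congr rfl fun σ _ => Finset.sum_congr rfl fun α _ => by
      rw [hΓ₀_symm x σ α ν]
  have s2 : ∑ σ : Fin n, ∑ α : Fin n, Γ₀ x α ν σ * K x σ α l
      = ∑ σ : Fin n, ∑ α : Fin n, Γ₀ x σ ν α * K x α σ l := by
    rw [Finset.sum_comm]
  have s3 : ∑ σ : Fin n, ∑ α : Fin n, K x σ σ α * Γ₀ x α ν l
      = ∑ σ : Fin n, ∑ α : Fin n, Γ₀ x α ν l * K x σ σ α :=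
    Finset.sum_congr rfl fun σ _ => Finset.sum_congr rfl fun α _ => mul_comm _ _
  have s4 : ∑ σ : Fin n, ∑ α : Fin n, K x σ ν α * Γ₀ x α σ l
      = ∑ σ : Fin n, ∑ α : Fin n, Γ₀ x α σ l * K x σ ν α :=
    Finset.sum_congr rfl fun σ _ => Finset.sum_congr rfl fun α _ => mul_comm _ _
  simp only [ricci, curv, covd]
  simp only [hd]
  simp only [hΓ]
  simp only [add_mul, mul_add, Finset.sum_add_distrib, Finset.sum_sub_distrib]
  linear_combination s1 - s2 + s3 - s4
end

section
/- Let n ≥ 1 and let h : ℝⁿ → Matrix (Fin n) (Fin n) ℝ be smooth with h(x) invertible for every x ∈ ℝⁿ (a tetrad field, with entries h(x) a ν = h^a_ν(x)). Define the Weitzenböck connection coefficients Γ : ℝⁿ → Fin n → Fin n → Fin n → ℝ by Γ^ρ_{μν}(x) = Σ_a ( (h(x))⁻¹ ρ a ) · ∂_μ ( h^a_ν )(x), where μ is the differentiation index. Then the curvature of Γ vanishes identically: R(Γ)^σ_{λμν}(x) = 0 for all x, σ, λ, μ, ν. -/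
open scoped BigOperators

section Aux

variable {n : ℕ}

/-- Determinant of a smooth matrix field is smooth. -/
lemma contDiff_det_aux {M : (Fin n → ℝ) → Matrix (Fin n) (Fin n) ℝ}
    (hM : ∀ a b, ContDiff ℝ (⊤ : ℕ∞) fun x => M x a b) :
    ContDiff ℝ (⊤ : ℕ∞) fun x => (M x).det := by
  have : (fun x => (M x).det)
      = fun x => ∑ σ : Equiv.Perm (Fin n),
          ((Equiv.Perm.sign σ : ℤ) : ℝ) * ∏ i, M x (σ i) i := by
    funext x; rw [Matrix.det_apply']
  rw [this]
  exact ContDiff.sum fun σ _ =>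
    contDiff_const.mul (contDiff_prod fun i _ => hM (σ i) i)

/-- Entries of the inverse of an everywhere-invertible smooth matrix field
are smooth. -/
lemma contDiff_inv_entry {h : (Fin n → ℝ) → Matrix (Fin n) (Fin n) ℝ}
    (h_smooth : ∀ a ν : Fin n, ContDiff ℝ (⊤ : ℕ∞) (fun x => h x a ν))
    (h_inv : ∀ x : Fin n → ℝ, IsUnit (h x).det) (σ a : Fin n) :
    ContDiff ℝ (⊤ : ℕ∞) fun x => (h x)⁻¹ σ a := by
  have hdet : ContDiff ℝ (⊤ : ℕ∞) fun x => (h x).det := contDiff_det_aux h_smooth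
  have hadj : ContDiff ℝ (⊤ : ℕ∞) fun x => (h x).adjugate σ a := by
    have : (fun x => (h x).adjugate σ a)
        = fun x => ((h x).updateRow a (Pi.single σ 1)).det := by
      funext x; rw [Matrix.adjugate_apply]
    rw [this]
    apply contDiff_det_aux
    intro b c
    by_cases hb : b = a
    · subst hb; simp only [Matrix.updateRow_self]; exact contDiff_const
    · simp only [Matrix.updateRow_apply, hb, if_false]; exact h_smooth b c
  have : (fun x => (h x)⁻¹ σ a)
      = fun x => ((h x).det)⁻¹ * (h x).adjugate σ a := by
    funext x
    rw [Matrix.inv_def, Matrix.smul_apply, Ring.inverse_eq_inv', smul_eq_mul]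
  rw [this]
  exact (hdet.inv fun x => (h_inv x).ne_zero).mul hadj

lemma pdv_sum {ι : Type*} {s : Finset ι} {F : ι → (Fin n → ℝ) → ℝ} {x : Fin n → ℝ}
    (hF : ∀ i ∈ s, DifferentiableAt ℝ (F i) x) (μ : Fin n) :
    pdv μ (fun y => ∑ i ∈ s, F i y) x = ∑ i ∈ s, pdv μ (F i) x := by
  unfold pdv
  rw [fderiv_fun_sum hF, ContinuousLinearMap.sum_apply]

lemma pdv_mul {f g : (Fin n → ℝ) → ℝ} {x : Fin n → ℝ}
    (hf : DifferentiableAt ℝ f x) (hg : DifferentiableAt ℝ g x) (μ : Fin n) :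
    pdv μ (fun y => f y * g y) x = pdv μ f x * g x + f x * pdv μ g x := by
  unfold pdv
  rw [fderiv_fun_mul hf hg]
  simp [smul_eq_mul]
  ring

lemma pdv_const {c : ℝ} {x : Fin n → ℝ} (μ : Fin n) :
    pdv μ (fun _ => c) x = 0 := by
  unfold pdv
  rw [fderiv_fun_const]
  simp

/-- The partial derivative of a smooth function is smooth. -/
lemma contDiff_pdv {f : (Fin n → ℝ) → ℝ} (hf : ContDiff ℝ (⊤ : ℕ∞) f) (ν : Fin n) :
    ContDiff ℝ (⊤ : ℕ∞) fun x => pdv ν f x := by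
  have h1 : ContDiff ℝ (⊤ : ℕ∞) (fderiv ℝ f) := hf.fderiv_right (by simp)
  exact (ContinuousLinearMap.apply ℝ ℝ (Pi.single ν 1)).contDiff.comp h1

/-- Schwarz: second partial derivatives of a smooth function commute. -/
lemma pdv_pdv_comm {f : (Fin n → ℝ) → ℝ} (hf : ContDiff ℝ (⊤ : ℕ∞) f) (μ ν : Fin n)
    (x : Fin n → ℝ) :
    pdv μ (fun y => pdv ν f y) x = pdv ν (fun y => pdv μ f y) x := by
  have hsymm : IsSymmSndFDerivAt ℝ f x :=
    hf.contDiffAt.isSymmSndFDerivAt (by rw [minSmoothness_of_isRCLikeNormedField]; exact WithTop.coe_le_coe.mpr (le_top : (2 : ℕ∞) ≤ ⊤))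
  have hd : DifferentiableAt ℝ (fderiv ℝ f) x :=
    (hf.fderiv_right (m := 1) (by exact WithTop.coe_le_coe.mpr (le_top : ((1 + 1 : ℕ∞)) ≤ ⊤))).differentiable (by simp) x
  have key : ∀ v w : Fin n → ℝ,
      fderiv ℝ (fun y => fderiv ℝ f y w) x v = fderiv ℝ (fderiv ℝ f) x v w := by
    intro v w
    have : (fun y => fderiv ℝ f y w)
        = fun y => (ContinuousLinearMap.apply ℝ ℝ w) (fderiv ℝ f y) := rfl
    rw [this, fderiv_clm_apply (differentiableAt_const _) hd]
    simp
  unfold pdv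
  rw [key, key]
  exact hsymm _ _

end Aux

/-- The Weitzenböck connection `Γ^ρ_{μν} = Σ_a (h⁻¹)^ρ_a ∂_μ h^a_ν`
of an everywhere-invertible smooth tetrad field `h` has identically vanishing
curvature (Section V of the paper: it "presents torsion, but no curvature"). -/
theorem weitzenboeck_flat (n : ℕ) (hn : 1 ≤ n)
    (h : (Fin n → ℝ) → Matrix (Fin n) (Fin n) ℝ)
    (h_smooth : ∀ a ν : Fin n, ContDiff ℝ (⊤ : ℕ∞) (fun x => h x a ν))
    (h_inv : ∀ x : Fin n → ℝ, IsUnit (h x).det)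
    (Γ : (Fin n → ℝ) → Fin n → Fin n → Fin n → ℝ)
    (hΓ : ∀ (x : Fin n → ℝ) (ρ μ ν : Fin n),
      Γ x ρ μ ν = ∑ a, (h x)⁻¹ ρ a * pdv μ (fun y => h y a ν) x) :
    ∀ (x : Fin n → ℝ) (σ l μ ν : Fin n), curv Γ x σ l μ ν = 0 := by
  -- smoothness of the inverse entries
  have hI : ∀ σ a : Fin n, ContDiff ℝ (⊤ : ℕ∞) fun x => (h x)⁻¹ σ a :=
    contDiff_inv_entry h_smooth h_inv
  -- differentiability shortcuts
  have hdI : ∀ (σ a : Fin n) (x : Fin n → ℝ),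
      DifferentiableAt ℝ (fun y => (h y)⁻¹ σ a) x :=
    fun σ a x => ((hI σ a).differentiable (by simp)) x
  have hdh : ∀ (a b : Fin n) (x : Fin n → ℝ),
      DifferentiableAt ℝ (fun y => h y a b) x :=
    fun a b x => ((h_smooth a b).differentiable (by simp)) x
  have hdph : ∀ (a b ν : Fin n) (x : Fin n → ℝ),
      DifferentiableAt ℝ (fun y => pdv ν (fun z => h z a b) y) x :=
    fun a b ν x => ((contDiff_pdv (h_smooth a b) ν).differentiable (by simp)) x
  -- the key derivative of the inverse:
  -- ∂_μ (h⁻¹)^σ_a = − Σ_b Γ^σ_{μb} (h⁻¹)^b_a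
  have B : ∀ (x : Fin n → ℝ) (μ σ a : Fin n),
      pdv μ (fun y => (h y)⁻¹ σ a) x = -∑ b, Γ x σ μ b * (h x)⁻¹ b a := by
    intro x μ σ a
    -- Differentiating Σ_c (h⁻¹)^σ_c h^c_b = δ_{σb} gives
    -- Σ_c ∂_μ(h⁻¹)^σ_c · h^c_b = −Γ^σ_{μb}.
    have C : ∀ b : Fin n,
        ∑ c, pdv μ (fun y => (h y)⁻¹ σ c) x * h x c b = -Γ x σ μ b := by
      intro b
      have hconst : (fun y => ∑ c, (h y)⁻¹ σ c * h y c b)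
          = fun _ => (1 : Matrix (Fin n) (Fin n) ℝ) σ b := by
        funext y
        rw [← Matrix.mul_apply, Matrix.nonsing_inv_mul _ (h_inv y)]
      have h0 : pdv μ (fun y => ∑ c, (h y)⁻¹ σ c * h y c b) x = 0 := by
        rw [hconst, pdv_const]
      rw [pdv_sum (fun c _ => ((hdI σ c x).fun_mul (hdh c b x))) μ] at h0
      have hexp : ∀ c : Fin n,
          pdv μ (fun y => (h y)⁻¹ σ c * h y c b) x
            = pdv μ (fun y => (h y)⁻¹ σ c) x * h x c b
              + (h x)⁻¹ σ c * pdv μ (fun y => h y c b) x :=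
        fun c => pdv_mul (hdI σ c x) (hdh c b x) μ
      rw [Finset.sum_congr rfl (fun c _ => hexp c), Finset.sum_add_distrib] at h0
      have := hΓ x σ μ b
      linarith [h0, this]
    calc pdv μ (fun y => (h y)⁻¹ σ a) x
        = ∑ c, pdv μ (fun y => (h y)⁻¹ σ c) x
            * ((1 : Matrix (Fin n) (Fin n) ℝ) c a) := by
          simp [Matrix.one_apply]
      _ = ∑ c, pdv μ (fun y => (h y)⁻¹ σ c) x * ∑ b, h x c b * (h x)⁻¹ b a := by
          refine Finset.sum_congr rfl fun c _ => ?_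
          rw [← Matrix.mul_apply, Matrix.mul_nonsing_inv _ (h_inv x)]
      _ = ∑ b, (∑ c, pdv μ (fun y => (h y)⁻¹ σ c) x * h x c b) * (h x)⁻¹ b a := by
          simp_rw [Finset.mul_sum, Finset.sum_mul, mul_assoc]
          exact Finset.sum_comm
      _ = -∑ b, Γ x σ μ b * (h x)⁻¹ b a := by
          simp_rw [fun b => C b]
          simp [Finset.sum_neg_distrib]
  -- derivative of Γ:
  have A : ∀ (x : Fin n → ℝ) (σ l μ ν : Fin n),
      pdv μ (fun y => Γ y σ ν l) x
        = -∑ b, Γ x σ μ b * Γ x b ν l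
          + ∑ a, (h x)⁻¹ σ a * pdv μ (fun y => pdv ν (fun z => h z a l) y) x := by
    intro x σ l μ ν
    have hΓfun : (fun y => Γ y σ ν l)
        = fun y => ∑ a, (h y)⁻¹ σ a * pdv ν (fun z => h z a l) y := by
      funext y; exact hΓ y σ ν l
    rw [hΓfun,
      pdv_sum (fun a _ => (hdI σ a x).fun_mul (hdph a l ν x)) μ]
    have hexp : ∀ a : Fin n,
        pdv μ (fun y => (h y)⁻¹ σ a * pdv ν (fun z => h z a l) y) x
          = pdv μ (fun y => (h y)⁻¹ σ a) x * pdv ν (fun z => h z a l) x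
            + (h x)⁻¹ σ a * pdv μ (fun y => pdv ν (fun z => h z a l) y) x :=
      fun a => pdv_mul (hdI σ a x) (hdph a l ν x) μ
    rw [Finset.sum_congr rfl fun a _ => hexp a, Finset.sum_add_distrib]
    congr 1
    calc ∑ a, pdv μ (fun y => (h y)⁻¹ σ a) x * pdv ν (fun z => h z a l) x
        = ∑ a, (-∑ b, Γ x σ μ b * (h x)⁻¹ b a) * pdv ν (fun z => h z a l) x := by
          refine Finset.sum_congr rfl fun a _ => ?_
          rw [B x μ σ a]
      _ = -∑ b, Γ x σ μ b * ∑ a, (h x)⁻¹ b a * pdv ν (fun z => h z a l) x := by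
          simp_rw [neg_mul, Finset.sum_neg_distrib, Finset.sum_mul]
          rw [Finset.sum_comm]
          congr 1
          refine Finset.sum_congr rfl fun b _ => ?_
          rw [Finset.mul_sum]
          exact Finset.sum_congr rfl fun a _ => by ring
      _ = -∑ b, Γ x σ μ b * Γ x b ν l := by
          congr 1
          exact Finset.sum_congr rfl fun b _ => by rw [← hΓ x b ν l]
  -- now the curvature computation
  intro x σ l μ ν
  rw [curv, A x σ l μ ν, A x σ l ν μ]
  have hschwarz : ∀ a : Fin n,
      pdv μ (fun y => pdv ν (fun z => h z a l) y) x
        = pdv ν (fun y => pdv μ (fun z => h z a l) y) x :=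
    fun a => pdv_pdv_comm (h_smooth a l) μ ν x
  simp_rw [fun a => hschwarz a]
  rw [Finset.sum_sub_distrib]
  ring
end
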